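/- Every STARC metric d satisfies: d(R1,R2) = 0 if and only if R1 and R2 induce the same ordering of policies, i.e., for all policies π, π': J_{R1}(π) ≤ J_{R1}(π') ⟺ J_{R2}(π) ≤ J_{R2}(π'). -/

import Mathlib

namespace RewardPaper

/-- A probability distribution on a finite type, represented as a function. -/
def IsDist {X : Type*} [Fintype X] (p : X → ℝ) : Prop :=
  (∀ x, 0 ≤ p x) ∧ (∑ x, p x) = 1

/-- Reward functions on `S × A × S`. -/
abbrev Reward (S A : Type*) := S → A → S → ℝ

/-- A policy assigns to each state a probability distribution over actions. -/
def IsPolicy {S A : Type*} [Fintype A] (π : S → A → ℝ) : Prop := ∀ s, IsDist (π s)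

/-- The type of policies. -/
abbrev Policy (S A : Type*) [Fintype A] := {π : S → A → ℝ // IsPolicy π}

/-- The distribution over states at time `t` of the Markov chain induced by
`τ`, `μ0` and the policy `π`. -/
noncomputable def stateDist {S A : Type*} [Fintype S] [Fintype A]
    (τ : S → A → S → ℝ) (μ0 : S → ℝ) (π : S → A → ℝ) : ℕ → S → ℝ
  | 0 => μ0
  | (t + 1) => fun s' => ∑ s, ∑ a, stateDist τ μ0 π t s * π s a * τ s a s'

/-- Policy evaluation function `J_R(π)`: expected discounted return of `π` under `R`. -/
noncomputable def J {S A : Type*} [Fintype S] [Fintype A]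
    (τ : S → A → S → ℝ) (μ0 : S → ℝ) (γ : ℝ) (R : Reward S A)
    (π : S → A → ℝ) : ℝ :=
  ∑' t : ℕ, γ ^ t * ∑ s, ∑ a, ∑ s', stateDist τ μ0 π t s * π s a * τ s a s' * R s a s'

/-- The value function `V^π_R(s)`: expected discounted return starting from `s`. -/
noncomputable def V {S A : Type*} [Fintype S] [Fintype A] [DecidableEq S]
    (τ : S → A → S → ℝ) (γ : ℝ) (R : Reward S A) (π : S → A → ℝ) (s : S) : ℝ :=
  J τ (fun s0 => if s0 = s then 1 else 0) γ R π

/-- Every state is reachable with positive probability under `τ` from `μ0`. -/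
def AllReachable {S A : Type*} [Fintype S] [Fintype A]
    (τ : S → A → S → ℝ) (μ0 : S → ℝ) : Prop :=
  ∀ s, ∃ (π : S → A → ℝ) (t : ℕ), IsPolicy π ∧ 0 < stateDist τ μ0 π t s

/-- `R2` is produced by potential shaping of `R1`. -/
def PotentialShaping {S A : Type*} (γ : ℝ) (R1 R2 : Reward S A) : Prop :=
  ∃ Φ : S → ℝ, ∀ s a s', R2 s a s' = R1 s a s' + γ * Φ s' - Φ s

/-- `R1` and `R2` differ by S'-redistribution with respect to `τ`. -/
def SRedist {S A : Type*} [Fintype S] (τ : S → A → S → ℝ) (R1 R2 : Reward S A) : Prop :=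
  ∀ s a, (∑ s', τ s a s' * R1 s a s') = (∑ s', τ s a s' * R2 s a s')

/-- `R1` and `R2` differ by (a composition of) potential shaping and S'-redistribution. -/
def DifferBy {S A : Type*} [Fintype S] (γ : ℝ) (τ : S → A → S → ℝ)
    (R1 R2 : Reward S A) : Prop :=
  ∃ R' : Reward S A, PotentialShaping γ R1 R' ∧ SRedist τ R' R2

/-- A canonicalisation function. -/
def IsCanon {S A : Type*} [Fintype S] (γ : ℝ) (τ : S → A → S → ℝ)
    (c : Reward S A → Reward S A) : Prop :=
  IsLinearMap ℝ c ∧ (∀ R, DifferBy γ τ R (c R)) ∧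
    ∀ R1 R2, c R1 = c R2 ↔ DifferBy γ τ R1 R2

/-- `n` is a norm on the subset `X` of reward space. -/
def IsNormOn {S A : Type*} (X : Set (Reward S A)) (n : Reward S A → ℝ) : Prop :=
  (∀ x ∈ X, 0 ≤ n x) ∧
  (∀ x ∈ X, (n x = 0 ↔ x = 0)) ∧
  (∀ x ∈ X, ∀ r : ℝ, n (r • x) = |r| * n x) ∧
  (∀ x ∈ X, ∀ y ∈ X, n (x + y) ≤ n x + n y)

/-- `p` is a norm on all of reward space. -/
def IsNorm {S A : Type*} (p : Reward S A → ℝ) : Prop := IsNormOn Set.univ p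

/-- `m` is a metric on the subset `X` of reward space. -/
def IsMetricOn {S A : Type*} (X : Set (Reward S A)) (m : Reward S A → Reward S A → ℝ) : Prop :=
  (∀ x ∈ X, m x x = 0) ∧ (∀ x ∈ X, ∀ y ∈ X, 0 ≤ m x y) ∧
  (∀ x ∈ X, ∀ y ∈ X, m x y = m y x) ∧
  (∀ x ∈ X, ∀ y ∈ X, ∀ z ∈ X, m x z ≤ m x y + m y z)

/-- `m` is an admissible metric on `X`: a metric bilipschitz equivalent to some norm. -/
def IsAdmissibleOn {S A : Type*} (X : Set (Reward S A))
    (m : Reward S A → Reward S A → ℝ) : Prop :=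
  IsMetricOn X m ∧
  ∃ (p : Reward S A → ℝ) (l u : ℝ), IsNorm p ∧ 0 < l ∧ 0 < u ∧
    ∀ x ∈ X, ∀ y ∈ X, l * p (x - y) ≤ m x y ∧ m x y ≤ u * p (x - y)

/-- `d` is a STARC metric. -/
def IsSTARC {S A : Type*} [Fintype S] (γ : ℝ) (τ : S → A → S → ℝ)
    (d : Reward S A → Reward S A → ℝ) : Prop :=
  ∃ (c : Reward S A → Reward S A) (n : Reward S A → ℝ)
    (m : Reward S A → Reward S A → ℝ) (s : Reward S A → Reward S A),
    IsCanon γ τ c ∧ IsNormOn (Set.range c) n ∧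
    (∀ R, (n (c R) = 0 → s R = c R) ∧ (n (c R) ≠ 0 → s R = (n (c R))⁻¹ • c R)) ∧
    IsAdmissibleOn (Set.range s) m ∧
    ∀ R1 R2, d R1 R2 = m (s R1) (s R2)

/-- An EPIC-like canonicalisation function: standardises potential shaping only. -/
def IsEpicLikeCanon {S A : Type*} (γ : ℝ) (c : Reward S A → Reward S A) : Prop :=
  IsLinearMap ℝ c ∧ (∀ R, PotentialShaping γ R (c R)) ∧
    ∀ R1 R2, c R1 = c R2 ↔ PotentialShaping γ R1 R2

/-- `d` is an EPIC-like metric. -/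
def IsEpicLike {S A : Type*} (γ : ℝ) (d : Reward S A → Reward S A → ℝ) : Prop :=
  ∃ (c : Reward S A → Reward S A) (n : Reward S A → ℝ)
    (m : Reward S A → Reward S A → ℝ) (s : Reward S A → Reward S A),
    IsEpicLikeCanon γ c ∧ IsNormOn (Set.range c) n ∧
    (∀ R, (n (c R) = 0 → s R = c R) ∧ (n (c R) ≠ 0 → s R = (n (c R))⁻¹ • c R)) ∧
    IsAdmissibleOn (Set.range c) m ∧
    ∀ R1 R2, d R1 R2 = m (s R1) (s R2)

/-- The maximal value of `J_R` over all policies. -/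
noncomputable def maxJ {S A : Type*} [Fintype S] [Fintype A]
    (τ : S → A → S → ℝ) (μ0 : S → ℝ) (γ : ℝ) (R : Reward S A) : ℝ :=
  ⨆ π : Policy S A, J τ μ0 γ R π.1

/-- The minimal value of `J_R` over all policies. -/
noncomputable def minJ {S A : Type*} [Fintype S] [Fintype A]
    (τ : S → A → S → ℝ) (μ0 : S → ℝ) (γ : ℝ) (R : Reward S A) : ℝ :=
  ⨅ π : Policy S A, J τ μ0 γ R π.1

/-- `R1` and `R2` induce the same ordering of policies. -/
def SameOrder {S A : Type*} [Fintype S] [Fintype A]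
    (τ : S → A → S → ℝ) (μ0 : S → ℝ) (γ : ℝ) (R1 R2 : Reward S A) : Prop :=
  ∀ π π' : Policy S A,
    (J τ μ0 γ R1 π.1 ≤ J τ μ0 γ R1 π'.1 ↔ J τ μ0 γ R2 π.1 ≤ J τ μ0 γ R2 π'.1)

/-- Soundness of a pseudometric on reward space. -/
def Sound {S A : Type*} [Fintype S] [Fintype A]
    (τ : S → A → S → ℝ) (μ0 : S → ℝ) (γ : ℝ)
    (d : Reward S A → Reward S A → ℝ) : Prop :=
  ∃ U : ℝ, 0 < U ∧ ∀ (R1 R2 : Reward S A) (π1 π2 : Policy S A),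
    J τ μ0 γ R2 π1.1 ≤ J τ μ0 γ R2 π2.1 →
    J τ μ0 γ R1 π1.1 - J τ μ0 γ R1 π2.1 ≤
      U * (maxJ τ μ0 γ R1 - minJ τ μ0 γ R1) * d R1 R2

/-- Completeness of a pseudometric on reward space. -/
def Complete {S A : Type*} [Fintype S] [Fintype A]
    (τ : S → A → S → ℝ) (μ0 : S → ℝ) (γ : ℝ)
    (d : Reward S A → Reward S A → ℝ) : Prop :=
  (∃ L : ℝ, 0 < L ∧ ∀ R1 R2 : Reward S A, ∃ π1 π2 : Policy S A,
    J τ μ0 γ R2 π1.1 ≤ J τ μ0 γ R2 π2.1 ∧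
    L * (maxJ τ μ0 γ R1 - minJ τ μ0 γ R1) * d R1 R2 ≤
      J τ μ0 γ R1 π1.1 - J τ μ0 γ R1 π2.1) ∧
  ∀ R1 R2 : Reward S A, SameOrder τ μ0 γ R1 R2 → d R1 R2 = 0

/-- `d` is a pseudometric on reward space. -/
def IsPseudometric {S A : Type*} (d : Reward S A → Reward S A → ℝ) : Prop :=
  (∀ x, d x x = 0) ∧ (∀ x y, 0 ≤ d x y) ∧ (∀ x y, d x y = d y x) ∧
    ∀ x y z, d x z ≤ d x y + d y z

/-- The EPIC canonicalisation. -/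
noncomputable def CEpic {S A : Type*} [Fintype S] [Fintype A]
    (DS : S → ℝ) (DA : A → ℝ) (γ : ℝ) (R : Reward S A) : Reward S A :=
  fun s a s' =>
    R s a s'
      + γ * (∑ a', ∑ σ', DA a' * DS σ' * R s' a' σ')
      - (∑ a', ∑ σ', DA a' * DS σ' * R s a' σ')
      - γ * (∑ σ, ∑ a', ∑ σ', DS σ * DA a' * DS σ' * R σ a' σ')

/-- Mean of `f(S,A,S')` with `S,S' ~ DS` and `A ~ DA` independent. -/
noncomputable def meanD {S A : Type*} [Fintype S] [Fintype A]
    (DS : S → ℝ) (DA : A → ℝ) (f : Reward S A) : ℝ :=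
  ∑ s, ∑ a, ∑ s', DS s * DA a * DS s' * f s a s'

/-- Covariance of `f(S,A,S')` and `g(S,A,S')`. -/
noncomputable def covD {S A : Type*} [Fintype S] [Fintype A]
    (DS : S → ℝ) (DA : A → ℝ) (f g : Reward S A) : ℝ :=
  ∑ s, ∑ a, ∑ s', DS s * DA a * DS s' *
    (f s a s' - meanD DS DA f) * (g s a s' - meanD DS DA g)

/-- Variance of `f(S,A,S')`. -/
noncomputable def varD {S A : Type*} [Fintype S] [Fintype A]
    (DS : S → ℝ) (DA : A → ℝ) (f : Reward S A) : ℝ :=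
  covD DS DA f f

/-- Pearson correlation of `f(S,A,S')` and `g(S,A,S')`. -/
noncomputable def pearsonD {S A : Type*} [Fintype S] [Fintype A]
    (DS : S → ℝ) (DA : A → ℝ) (f g : Reward S A) : ℝ :=
  covD DS DA f g / (Real.sqrt (varD DS DA f) * Real.sqrt (varD DS DA g))

/-- The EPIC distance. -/
noncomputable def DEpic {S A : Type*} [Fintype S] [Fintype A]
    (DS : S → ℝ) (DA : A → ℝ) (γ : ℝ) (R1 R2 : Reward S A) : ℝ :=
  Real.sqrt ((1 - pearsonD DS DA (CEpic DS DA γ R1) (CEpic DS DA γ R2)) / 2)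

/-- The DARD canonicalisation. -/
noncomputable def CDard {S A : Type*} [Fintype S] [Fintype A]
    (τ : S → A → S → ℝ) (DA : A → ℝ) (γ : ℝ) (R : Reward S A) : Reward S A :=
  fun s a s' =>
    R s a s' + ∑ a', DA a' *
      (γ * (∑ σ'', τ s' a' σ'' * R s' a' σ'')
        - (∑ σ', τ s a' σ' * R s a' σ')
        - γ * (∑ σ', ∑ σ'', τ s a' σ' * τ s' a' σ'' * R σ' a' σ''))

/-- The DARD distance. -/
noncomputable def DDard {S A : Type*} [Fintype S] [Fintype A]
    (τ : S → A → S → ℝ) (DS : S → ℝ) (DA : A → ℝ) (γ : ℝ) (R1 R2 : Reward S A) : ℝ :=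
  Real.sqrt ((1 - pearsonD DS DA (CDard τ DA γ R1) (CDard τ DA γ R2)) / 2)

/-- The (unweighted) L2 norm on reward space. -/
noncomputable def l2Norm {S A : Type*} [Fintype S] [Fintype A] (R : Reward S A) : ℝ :=
  Real.sqrt (∑ s, ∑ a, ∑ s', (R s a s') ^ 2)

/-- A weighted L2 norm on reward space. -/
noncomputable def weightedL2 {S A : Type*} [Fintype S] [Fintype A]
    (w : S → A → S → ℝ) (R : Reward S A) : ℝ :=
  Real.sqrt (∑ s, ∑ a, ∑ s', w s a s' * (R s a s') ^ 2)

/-- The L2 norm weighted by the product distribution `DS ⊗ DA ⊗ DS`. -/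
noncomputable def l2NormD {S A : Type*} [Fintype S] [Fintype A]
    (DS : S → ℝ) (DA : A → ℝ) (R : Reward S A) : ℝ :=
  Real.sqrt (∑ s, ∑ a, ∑ s', DS s * DA a * DS s' * (R s a s') ^ 2)

/-- Expected discounted return of a reward function along a sequence of per-timestep
transition distributions. -/
noncomputable def Eret {S A : Type*} [Fintype S] [Fintype A]
    (γ : ℝ) (R : Reward S A) (p : ℕ → (S × A × S) → ℝ) : ℝ :=
  ∑' t : ℕ, γ ^ t * ∑ x : S × A × S, p t x * R x.1 x.2.1 x.2.2

section Aux

variable {S A : Type*} [Fintype S] [Fintype A]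

/-- inner expected reward at one step given state distribution D -/
noncomputable def inner3 (τ : S → A → S → ℝ) (R : Reward S A) (π : S → A → ℝ)
    (D : S → ℝ) : ℝ :=
  ∑ s, ∑ a, ∑ s', D s * π s a * τ s a s' * R s a s'

lemma J_eq (τ : S → A → S → ℝ) (μ : S → ℝ) (γ : ℝ) (R : Reward S A) (π : S → A → ℝ) :
    J τ μ γ R π = ∑' t : ℕ, γ ^ t * inner3 τ R π (stateDist τ μ π t) := rfl

variable {τ : S → A → S → ℝ} {μ : S → ℝ} {π : S → A → ℝ} {γ : ℝ}

lemma isDist_delta [DecidableEq S] (s : S) :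
    IsDist (fun s0 => if s0 = s then (1:ℝ) else 0) := by
  constructor
  · intro x; dsimp only; split <;> norm_num
  · simp

lemma stateDist_isDist (hτ : ∀ s a, IsDist (τ s a)) (hμ : IsDist μ) (hπ : IsPolicy π) :
    ∀ t, IsDist (stateDist τ μ π t) := by
  intro t
  induction t with
  | zero => exact hμ
  | succ t ih =>
    constructor
    · intro s'
      apply Finset.sum_nonneg; intro s _
      apply Finset.sum_nonneg; intro a _
      have := ih.1 s
      have := (hπ s).1 a
      have := (hτ s a).1 s'
      positivity
    · show (∑ s', ∑ s, ∑ a, stateDist τ μ π t s * π s a * τ s a s') = 1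
      rw [Finset.sum_comm]
      have : ∀ s, (∑ s', ∑ a, stateDist τ μ π t s * π s a * τ s a s')
          = stateDist τ μ π t s := by
        intro s
        rw [Finset.sum_comm]
        have : ∀ a, (∑ s', stateDist τ μ π t s * π s a * τ s a s')
            = stateDist τ μ π t s * π s a := by
          intro a
          rw [← Finset.mul_sum, (hτ s a).2, mul_one]
        simp only [this]
        rw [← Finset.mul_sum, (hπ s).2, mul_one]
      simp only [this, ih.2]

lemma le_one_of_dist {X : Type*} [Fintype X] {p : X → ℝ} (hp : IsDist p) (x : X) :
    p x ≤ 1 := by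
  rw [← hp.2]
  exact Finset.single_le_sum (fun i _ => hp.1 i) (Finset.mem_univ x)

/-- total absolute bound for a reward -/
noncomputable def Mb (R : Reward S A) : ℝ := ∑ s, ∑ a, ∑ s', |R s a s'|

lemma abs_inner3_le (hτ : ∀ s a, IsDist (τ s a)) (hπ : IsPolicy π)
    {D : S → ℝ} (hD : IsDist D) (R : Reward S A) :
    |inner3 τ R π D| ≤ Mb R := by
  unfold inner3 Mb
  calc |∑ s, ∑ a, ∑ s', D s * π s a * τ s a s' * R s a s'|
      ≤ ∑ s, |∑ a, ∑ s', D s * π s a * τ s a s' * R s a s'| :=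
        Finset.abs_sum_le_sum_abs _ _
    _ ≤ ∑ s, ∑ a, ∑ s', |R s a s'| := by
        apply Finset.sum_le_sum; intro s _
        calc |∑ a, ∑ s', D s * π s a * τ s a s' * R s a s'|
            ≤ ∑ a, |∑ s', D s * π s a * τ s a s' * R s a s'| :=
              Finset.abs_sum_le_sum_abs _ _
          _ ≤ ∑ a, ∑ s', |R s a s'| := by
              apply Finset.sum_le_sum; intro a _
              calc |∑ s', D s * π s a * τ s a s' * R s a s'|
                  ≤ ∑ s', |D s * π s a * τ s a s' * R s a s'| :=
                    Finset.abs_sum_le_sum_abs _ _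
                _ ≤ ∑ s', |R s a s'| := by
                    apply Finset.sum_le_sum; intro s' _
                    rw [abs_mul, abs_mul, abs_mul]
                    have h1 : |D s| ≤ 1 := by
                      rw [abs_of_nonneg (hD.1 s)]; exact le_one_of_dist hD s
                    have h2 : |π s a| ≤ 1 := by
                      rw [abs_of_nonneg ((hπ s).1 a)]; exact le_one_of_dist (hπ s) a
                    have h3 : |τ s a s'| ≤ 1 := by
                      rw [abs_of_nonneg ((hτ s a).1 s')]; exact le_one_of_dist (hτ s a) s'
                    calc |D s| * |π s a| * |τ s a s'| * |R s a s'|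
                        ≤ 1 * 1 * 1 * |R s a s'| := by
                          gcongr
                      _ = |R s a s'| := by ring

lemma summable_geom_bound (hγ : γ ∈ Set.Ioo (0:ℝ) 1) (u : ℕ → ℝ) (C : ℝ)
    (hu : ∀ t, |u t| ≤ C) : Summable (fun t => γ ^ t * u t) := by
  apply Summable.of_abs
  have hs : Summable (fun t : ℕ => C * γ ^ t) :=
    (summable_geometric_of_lt_one hγ.1.le hγ.2).mul_left C
  apply hs.of_nonneg_of_le (fun t => abs_nonneg _)
  intro t
  rw [abs_mul, abs_pow, abs_of_nonneg hγ.1.le, mul_comm]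
  exact mul_le_mul_of_nonneg_right (hu t) (pow_nonneg hγ.1.le t)

lemma summable_J (hτ : ∀ s a, IsDist (τ s a)) (hμ : IsDist μ) (hπ : IsPolicy π)
    (hγ : γ ∈ Set.Ioo (0:ℝ) 1) (R : Reward S A) :
    Summable (fun t => γ ^ t * inner3 τ R π (stateDist τ μ π t)) :=
  summable_geom_bound hγ _ (Mb R)
    (fun t => abs_inner3_le hτ hπ (stateDist_isDist hτ hμ hπ t) R)

end Aux


section Aux2

variable {S A : Type*} [Fintype S] [Fintype A]
variable {τ : S → A → S → ℝ} {μ : S → ℝ} {π : S → A → ℝ} {γ : ℝ} {R1 R2 : Reward S A}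

lemma inner3_combo (R1 R2 : Reward S A) (α : ℝ) (D : S → ℝ) :
    inner3 τ (fun s a s' => R2 s a s' - α * R1 s a s') π D
      = inner3 τ R2 π D - α * inner3 τ R1 π D := by
  unfold inner3
  rw [Finset.mul_sum, ← Finset.sum_sub_distrib]
  apply Finset.sum_congr rfl; intro s _
  rw [Finset.mul_sum, ← Finset.sum_sub_distrib]
  apply Finset.sum_congr rfl; intro a _
  rw [Finset.mul_sum, ← Finset.sum_sub_distrib]
  apply Finset.sum_congr rfl; intro s' _
  ring

/-- J of a linear combination pointwise. -/
lemma J_combo (hτ : ∀ s a, IsDist (τ s a)) (hμ : IsDist μ) (hπ : IsPolicy π)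
    (hγ : γ ∈ Set.Ioo (0:ℝ) 1) (R1 R2 : Reward S A) (α : ℝ) :
    J τ μ γ (fun s a s' => R2 s a s' - α * R1 s a s') π
      = J τ μ γ R2 π - α * J τ μ γ R1 π := by
  rw [J_eq, J_eq, J_eq]
  have h1 := summable_J hτ hμ hπ hγ R1
  have h2 := summable_J hτ hμ hπ hγ R2
  calc (∑' t : ℕ, γ ^ t * inner3 τ (fun s a s' => R2 s a s' - α * R1 s a s') π
          (stateDist τ μ π t))
      = ∑' t : ℕ, (γ ^ t * inner3 τ R2 π (stateDist τ μ π t)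
          - α * (γ ^ t * inner3 τ R1 π (stateDist τ μ π t))) := by
        apply tsum_congr; intro t
        rw [inner3_combo]; ring
    _ = _ := by
        rw [Summable.tsum_sub h2 (h1.mul_left α), tsum_mul_left]

lemma J_sredist (h : SRedist τ R1 R2) (μ : S → ℝ) (γ : ℝ) (π : S → A → ℝ) :
    J τ μ γ R1 π = J τ μ γ R2 π := by
  rw [J_eq, J_eq]
  apply tsum_congr; intro t
  congr 1
  unfold inner3
  apply Finset.sum_congr rfl; intro s _
  apply Finset.sum_congr rfl; intro a _
  have : ∀ R : Reward S A, (∑ s', stateDist τ μ π t s * π s a * τ s a s' * R s a s')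
      = stateDist τ μ π t s * π s a * ∑ s', τ s a s' * R s a s' := by
    intro R; rw [Finset.mul_sum]; apply Finset.sum_congr rfl; intro s' _; ring
  rw [this R1, this R2, h s a]

lemma inner3_const (hτ : ∀ s a, IsDist (τ s a)) (hπ : IsPolicy π)
    {D : S → ℝ} (hD : IsDist D) (k : ℝ) :
    inner3 τ (fun _ _ _ => k) π D = k := by
  unfold inner3
  have : ∀ s a, (∑ s', D s * π s a * τ s a s' * k) = D s * π s a * k := by
    intro s a
    have : ∀ s', D s * π s a * τ s a s' * k = D s * π s a * k * τ s a s' := by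
      intro s'; ring
    simp only [this]
    rw [← Finset.mul_sum, (hτ s a).2, mul_one]
  simp only [this]
  have : ∀ s, (∑ a, D s * π s a * k) = D s * k := by
    intro s
    have : ∀ a, D s * π s a * k = D s * k * π s a := by intro a; ring
    simp only [this]
    rw [← Finset.mul_sum, (hπ s).2, mul_one]
  simp only [this]
  rw [← Finset.sum_mul, hD.2, one_mul]

lemma J_const (hτ : ∀ s a, IsDist (τ s a)) (hμ : IsDist μ) (hπ : IsPolicy π)
    (hγ : γ ∈ Set.Ioo (0:ℝ) 1) (k : ℝ) :
    J τ μ γ (fun _ _ _ => k) π = k / (1 - γ) := by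
  rw [J_eq]
  have : ∀ t : ℕ, γ ^ t * inner3 τ (fun _ _ _ => k) π (stateDist τ μ π t)
      = γ ^ t * k := by
    intro t
    rw [inner3_const hτ hπ (stateDist_isDist hτ hμ hπ t)]
  rw [tsum_congr this, tsum_mul_right, tsum_geometric_of_lt_one hγ.1.le hγ.2]
  rw [div_eq_mul_inv, mul_comm]

lemma J_zero (τ : S → A → S → ℝ) (μ : S → ℝ) (γ : ℝ) (π : S → A → ℝ) :
    J τ μ γ (0 : Reward S A) π = 0 := by
  rw [J_eq]
  have : ∀ t : ℕ, γ ^ t * inner3 τ (0 : Reward S A) π (stateDist τ μ π t) = 0 := by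
    intro t
    unfold inner3
    simp
  rw [tsum_congr this, tsum_zero]

end Aux2

section Aux3

variable {S A : Type*} [Fintype S] [Fintype A]
variable {τ : S → A → S → ℝ} {μ : S → ℝ} {π : S → A → ℝ} {γ : ℝ} {R : Reward S A}

lemma sum_rot (f : S → A → S → ℝ) :
    (∑ s, ∑ a, ∑ s', f s a s') = ∑ s', ∑ s, ∑ a, f s a s' := by
  calc (∑ s, ∑ a, ∑ s', f s a s') = ∑ s, ∑ s', ∑ a, f s a s' :=
        Finset.sum_congr rfl (fun s _ => Finset.sum_comm)
    _ = ∑ s', ∑ s, ∑ a, f s a s' := Finset.sum_comm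

/-- point mass at a state -/
def dd [DecidableEq S] (s : S) : S → ℝ := fun s0 => if s0 = s then 1 else 0

lemma isDist_dd [DecidableEq S] (s : S) : IsDist (dd s) := isDist_delta s

lemma stateDist_mu_linear [DecidableEq S] (τ : S → A → S → ℝ) (μ : S → ℝ)
    (π : S → A → ℝ) :
    ∀ (t : ℕ) (s : S), stateDist τ μ π t s = ∑ σ, μ σ * stateDist τ (dd σ) π t s := by
  intro t
  induction t with
  | zero =>
    intro s
    show μ s = ∑ σ, μ σ * dd σ s
    unfold dd
    simp
  | succ t ih =>
    intro s
    show (∑ σ', ∑ a, stateDist τ μ π t σ' * π σ' a * τ σ' a s) = _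
    calc (∑ σ', ∑ a, stateDist τ μ π t σ' * π σ' a * τ σ' a s)
        = ∑ σ', ∑ a, ∑ σ, μ σ * (stateDist τ (dd σ) π t σ' * π σ' a * τ σ' a s) := by
          apply Finset.sum_congr rfl; intro σ' _
          apply Finset.sum_congr rfl; intro a _
          rw [ih σ', Finset.sum_mul, Finset.sum_mul]
          apply Finset.sum_congr rfl; intro σ _
          ring
      _ = ∑ σ, ∑ σ', ∑ a, μ σ * (stateDist τ (dd σ) π t σ' * π σ' a * τ σ' a s) :=
          sum_rot _
      _ = ∑ σ, μ σ * ∑ σ', ∑ a, stateDist τ (dd σ) π t σ' * π σ' a * τ σ' a s := by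
          apply Finset.sum_congr rfl; intro σ _
          rw [Finset.mul_sum]
          apply Finset.sum_congr rfl; intro σ' _
          rw [Finset.mul_sum]
      _ = _ := rfl

lemma inner3_D_linear [DecidableEq S] (R : Reward S A) (t : ℕ) :
    inner3 τ R π (stateDist τ μ π t)
      = ∑ σ, μ σ * inner3 τ R π (stateDist τ (dd σ) π t) := by
  unfold inner3
  calc (∑ s, ∑ a, ∑ s', stateDist τ μ π t s * π s a * τ s a s' * R s a s')
      = ∑ s, ∑ a, ∑ s', ∑ σ, μ σ *
          (stateDist τ (dd σ) π t s * π s a * τ s a s' * R s a s') := by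
        apply Finset.sum_congr rfl; intro s _
        apply Finset.sum_congr rfl; intro a _
        apply Finset.sum_congr rfl; intro s' _
        rw [stateDist_mu_linear τ μ π t s, Finset.sum_mul, Finset.sum_mul,
          Finset.sum_mul]
        apply Finset.sum_congr rfl; intro σ _; ring
    _ = ∑ s, ∑ a, ∑ σ, ∑ s', μ σ *
          (stateDist τ (dd σ) π t s * π s a * τ s a s' * R s a s') := by
        apply Finset.sum_congr rfl; intro s _
        apply Finset.sum_congr rfl; intro a _
        exact Finset.sum_comm
    _ = ∑ σ, ∑ s, ∑ a, ∑ s', μ σ *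
          (stateDist τ (dd σ) π t s * π s a * τ s a s' * R s a s') :=
        sum_rot (fun s a σ => ∑ s', μ σ *
          (stateDist τ (dd σ) π t s * π s a * τ s a s' * R s a s'))
    _ = ∑ σ, μ σ * ∑ s, ∑ a, ∑ s',
          stateDist τ (dd σ) π t s * π s a * τ s a s' * R s a s' := by
        apply Finset.sum_congr rfl; intro σ _
        rw [Finset.mul_sum]
        apply Finset.sum_congr rfl; intro s _
        rw [Finset.mul_sum]
        apply Finset.sum_congr rfl; intro a _
        rw [Finset.mul_sum]

lemma J_mu_linear [DecidableEq S] (hτ : ∀ s a, IsDist (τ s a)) (hπ : IsPolicy π)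
    (hγ : γ ∈ Set.Ioo (0:ℝ) 1) (R : Reward S A) (μ : S → ℝ) :
    J τ μ γ R π = ∑ σ, μ σ * J τ (dd σ) γ R π := by
  rw [J_eq]
  have key : ∀ t : ℕ, γ ^ t * inner3 τ R π (stateDist τ μ π t)
      = ∑ σ, μ σ * (γ ^ t * inner3 τ R π (stateDist τ (dd σ) π t)) := by
    intro t
    rw [inner3_D_linear, Finset.mul_sum]
    apply Finset.sum_congr rfl; intro σ _; ring
  rw [tsum_congr key, Summable.tsum_finsetSum]
  · apply Finset.sum_congr rfl; intro σ _
    rw [tsum_mul_left, ← J_eq]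
  · intro σ _
    exact (summable_J hτ (isDist_dd σ) hπ hγ R).mul_left (μ σ)

/-- one-step pushforward of a state distribution -/
noncomputable def stepD (τ : S → A → S → ℝ) (π : S → A → ℝ) (μ : S → ℝ) : S → ℝ :=
  fun s' => ∑ s, ∑ a, μ s * π s a * τ s a s'

lemma isDist_stepD (hτ : ∀ s a, IsDist (τ s a)) (hμ : IsDist μ) (hπ : IsPolicy π) :
    IsDist (stepD τ π μ) := by
  have h := stateDist_isDist hτ hμ hπ 1
  exact h

lemma stateDist_succ (τ : S → A → S → ℝ) (π : S → A → ℝ) :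
    ∀ (t : ℕ) (μ : S → ℝ), stateDist τ μ π (t + 1) = stateDist τ (stepD τ π μ) π t := by
  intro t
  induction t with
  | zero => intro μ; rfl
  | succ t ih =>
    intro μ
    show (fun s' => ∑ s, ∑ a, stateDist τ μ π (t+1) s * π s a * τ s a s') = _
    rw [ih μ]
    rfl

lemma J_step (hτ : ∀ s a, IsDist (τ s a)) (hμ : IsDist μ) (hπ : IsPolicy π)
    (hγ : γ ∈ Set.Ioo (0:ℝ) 1) (R : Reward S A) :
    J τ μ γ R π = inner3 τ R π μ + γ * J τ (stepD τ π μ) γ R π := by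
  rw [J_eq, Summable.tsum_eq_zero_add (summable_J hτ hμ hπ hγ R)]
  congr 1
  · simp [stateDist]
  · have : ∀ t : ℕ, γ ^ (t + 1) * inner3 τ R π (stateDist τ μ π (t + 1))
        = γ * (γ ^ t * inner3 τ R π (stateDist τ (stepD τ π μ) π t)) := by
      intro t
      rw [stateDist_succ τ π t μ]
      ring
    rw [tsum_congr this, tsum_mul_left, ← J_eq]

open Filter in
lemma tsum_telescope_neg (G : ℕ → ℝ) (hs : Summable fun t => G (t + 1) - G t)
    (h0 : Tendsto G atTop (nhds 0)) : (∑' t, (G (t + 1) - G t)) = -G 0 := by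
  have h1 := hs.hasSum.tendsto_sum_nat
  have h2 : Tendsto (fun n => ∑ i ∈ Finset.range n, (G (i + 1) - G i)) atTop
      (nhds (-G 0)) := by
    have : (fun n => ∑ i ∈ Finset.range n, (G (i + 1) - G i)) = fun n => G n - G 0 := by
      funext n; exact Finset.sum_range_sub G n
    rw [this]
    simpa using h0.sub tendsto_const_nhds
  exact tendsto_nhds_unique h1 h2

lemma inner3_add (F1 F2 : Reward S A) (D : S → ℝ) :
    inner3 τ (fun s a s' => F1 s a s' + F2 s a s') π D
      = inner3 τ F1 π D + inner3 τ F2 π D := by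
  unfold inner3
  rw [← Finset.sum_add_distrib]
  apply Finset.sum_congr rfl; intro s _
  rw [← Finset.sum_add_distrib]
  apply Finset.sum_congr rfl; intro a _
  rw [← Finset.sum_add_distrib]
  apply Finset.sum_congr rfl; intro s' _
  ring

lemma inner3_shape (hτ : ∀ s a, IsDist (τ s a)) (hπ : IsPolicy π) (Φ : S → ℝ)
    (t : ℕ) :
    inner3 τ (fun _ _ s' => γ * Φ s') π (stateDist τ μ π t)
      - inner3 τ (fun s _ _ => Φ s) π (stateDist τ μ π t)
      = γ * (∑ s, stateDist τ μ π (t+1) s * Φ s) - ∑ s, stateDist τ μ π t s * Φ s := by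
  congr 1
  · unfold inner3
    rw [sum_rot]
    rw [Finset.mul_sum]
    apply Finset.sum_congr rfl; intro s' _
    show (∑ s, ∑ a, stateDist τ μ π t s * π s a * τ s a s' * (γ * Φ s'))
        = γ * ((∑ s, ∑ a, stateDist τ μ π t s * π s a * τ s a s') * Φ s')
    rw [Finset.sum_mul, Finset.mul_sum]
    apply Finset.sum_congr rfl; intro s _
    rw [Finset.sum_mul, Finset.mul_sum]
    apply Finset.sum_congr rfl; intro a _
    ring
  · unfold inner3
    apply Finset.sum_congr rfl; intro s _
    have h1 : ∀ a, (∑ s', stateDist τ μ π t s * π s a * τ s a s' * Φ s)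
        = stateDist τ μ π t s * Φ s * π s a := by
      intro a
      have : ∀ s', stateDist τ μ π t s * π s a * τ s a s' * Φ s
          = stateDist τ μ π t s * Φ s * π s a * τ s a s' := by intro s'; ring
      simp only [this]
      rw [← Finset.mul_sum, (hτ s a).2, mul_one]
    simp only [h1]
    rw [← Finset.mul_sum, (hπ s).2, mul_one]

lemma J_shaping (hτ : ∀ s a, IsDist (τ s a)) (hμ : IsDist μ) (hπ : IsPolicy π)
    (hγ : γ ∈ Set.Ioo (0:ℝ) 1) (R : Reward S A) (Φ : S → ℝ) :
    J τ μ γ (fun s a s' => R s a s' + γ * Φ s' - Φ s) π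
      = J τ μ γ R π - ∑ s, μ s * Φ s := by
  set g : ℕ → ℝ := fun t => ∑ s, stateDist τ μ π t s * Φ s with hg
  have hgb : ∀ t, |g t| ≤ ∑ s, |Φ s| := by
    intro t
    calc |∑ s, stateDist τ μ π t s * Φ s| ≤ ∑ s, |stateDist τ μ π t s * Φ s| :=
          Finset.abs_sum_le_sum_abs _ _
      _ ≤ ∑ s, |Φ s| := by
          apply Finset.sum_le_sum; intro s _
          rw [abs_mul, abs_of_nonneg ((stateDist_isDist hτ hμ hπ t).1 s)]
          calc stateDist τ μ π t s * |Φ s| ≤ 1 * |Φ s| :=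
                mul_le_mul_of_nonneg_right
                  (le_one_of_dist (stateDist_isDist hτ hμ hπ t) s) (abs_nonneg _)
            _ = |Φ s| := one_mul _
  have hpt : ∀ t : ℕ,
      γ ^ t * inner3 τ (fun s a s' => R s a s' + γ * Φ s' - Φ s) π (stateDist τ μ π t)
      = γ ^ t * inner3 τ R π (stateDist τ μ π t)
        + (γ ^ (t+1) * g (t+1) - γ ^ t * g t) := by
    intro t
    have e1 : (fun s a s' => R s a s' + γ * Φ s' - Φ s)
        = (fun s a s' => R s a s' + ((fun (_ : S) (_ : A) s' => γ * Φ s') s a s'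
            + (fun s (_ : A) (_ : S) => -Φ s) s a s')) := by
      funext s a s'; ring
    rw [e1, inner3_add, inner3_add]
    have e2 : inner3 τ (fun s _ _ => -Φ s) π (stateDist τ μ π t)
        = - inner3 τ (fun s _ _ => Φ s) π (stateDist τ μ π t) := by
      unfold inner3
      rw [← Finset.sum_neg_distrib]
      apply Finset.sum_congr rfl; intro s _
      rw [← Finset.sum_neg_distrib]
      apply Finset.sum_congr rfl; intro a _
      rw [← Finset.sum_neg_distrib]
      apply Finset.sum_congr rfl; intro s' _; ring
    have e3 := inner3_shape (μ := μ) (γ := γ) hτ hπ Φ t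
    have : inner3 τ (fun _ _ s' => γ * Φ s') π (stateDist τ μ π t)
        - inner3 τ (fun s _ _ => Φ s) π (stateDist τ μ π t)
        = γ * g (t+1) - g t := e3
    rw [e2]
    have : inner3 τ (fun _ _ s' => γ * Φ s') π (stateDist τ μ π t)
        + -inner3 τ (fun s _ _ => Φ s) π (stateDist τ μ π t) = γ * g (t+1) - g t := by
      rw [← this]; ring
    rw [this]
    ring
  have hsum2 : Summable (fun t : ℕ => γ ^ (t+1) * g (t+1) - γ ^ t * g t) := by
    have : ∀ t : ℕ, γ ^ (t+1) * g (t+1) - γ ^ t * g t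
        = γ ^ t * (γ * g (t+1) - g t) := by intro t; ring
    rw [funext this]
    apply summable_geom_bound hγ _ (2 * ∑ s, |Φ s|)
    intro t
    calc |γ * g (t+1) - g t| ≤ |γ * g (t+1)| + |g t| := abs_sub _ _
      _ ≤ 1 * (∑ s, |Φ s|) + (∑ s, |Φ s|) := by
          apply add_le_add _ (hgb t)
          rw [abs_mul, abs_of_nonneg hγ.1.le]
          apply mul_le_mul hγ.2.le (hgb (t+1)) (abs_nonneg _) zero_le_one
      _ = 2 * ∑ s, |Φ s| := by ring
  have htel : (∑' t : ℕ, (γ ^ (t+1) * g (t+1) - γ ^ t * g t)) = - g 0 := by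
    have := tsum_telescope_neg (fun t => γ ^ t * g t) hsum2 ?_
    · simpa using this
    · apply squeeze_zero_norm (a := fun n => (∑ s, |Φ s|) * γ ^ n)
      · intro n
        rw [Real.norm_eq_abs, abs_mul, abs_pow, abs_of_nonneg hγ.1.le, mul_comm]
        exact mul_le_mul_of_nonneg_right (hgb n) (pow_nonneg hγ.1.le n)
      · have := (tendsto_pow_atTop_nhds_zero_of_lt_one hγ.1.le hγ.2).const_mul
          (∑ s, |Φ s|)
        simpa using this
  rw [J_eq, tsum_congr hpt,
    Summable.tsum_add (summable_J hτ hμ hπ hγ R) hsum2, htel, ← J_eq]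
  have : g 0 = ∑ s, μ s * Φ s := rfl
  rw [this]
  ring

end Aux3
section Aux4

variable {S A : Type*} [Fintype S] [Fintype A]
variable {τ : S → A → S → ℝ} {μ0 : S → ℝ} {π : S → A → ℝ} {γ : ℝ} {R : Reward S A}

lemma J_differBy (hτ : ∀ s a, IsDist (τ s a)) (hμ0 : IsDist μ0)
    (hγ : γ ∈ Set.Ioo (0:ℝ) 1) {Ra Rb : Reward S A} (h : DifferBy γ τ Ra Rb) :
    ∃ k : ℝ, ∀ π, IsPolicy π → J τ μ0 γ Rb π = J τ μ0 γ Ra π + k := by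
  obtain ⟨R', ⟨Φ, hΦ⟩, hred⟩ := h
  refine ⟨-∑ s, μ0 s * Φ s, fun π hπ => ?_⟩
  have hR' : R' = fun s a s' => Ra s a s' + γ * Φ s' - Φ s := by
    funext s a s'; exact hΦ s a s'
  rw [← J_sredist hred μ0 γ π, hR', J_shaping hτ hμ0 hπ hγ Ra Φ]
  ring

/-- discounted state occupancy -/
noncomputable def yocc (τ : S → A → S → ℝ) (μ0 : S → ℝ) (γ : ℝ) (π : S → A → ℝ) :
    S → ℝ := fun s => ∑' t : ℕ, γ ^ t * stateDist τ μ0 π t s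

lemma summable_yocc (hτ : ∀ s a, IsDist (τ s a)) (hμ0 : IsDist μ0) (hπ : IsPolicy π)
    (hγ : γ ∈ Set.Ioo (0:ℝ) 1) (s : S) :
    Summable (fun t : ℕ => γ ^ t * stateDist τ μ0 π t s) := by
  apply summable_geom_bound hγ _ 1
  intro t
  rw [abs_of_nonneg ((stateDist_isDist hτ hμ0 hπ t).1 s)]
  exact le_one_of_dist (stateDist_isDist hτ hμ0 hπ t) s

lemma yocc_nonneg (hτ : ∀ s a, IsDist (τ s a)) (hμ0 : IsDist μ0) (hπ : IsPolicy π)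
    (hγ : γ ∈ Set.Ioo (0:ℝ) 1) (s : S) : 0 ≤ yocc τ μ0 γ π s :=
  tsum_nonneg (fun t => mul_nonneg (pow_nonneg hγ.1.le t)
    ((stateDist_isDist hτ hμ0 hπ t).1 s))

lemma yocc_pos (hτ : ∀ s a, IsDist (τ s a)) (hμ0 : IsDist μ0) (hπ : IsPolicy π)
    (hγ : γ ∈ Set.Ioo (0:ℝ) 1) {s : S} (h : ∃ t, 0 < stateDist τ μ0 π t s) :
    0 < yocc τ μ0 γ π s := by
  obtain ⟨t, ht⟩ := h
  have h1 : γ ^ t * stateDist τ μ0 π t s ≤ yocc τ μ0 γ π s :=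
    Summable.le_tsum (summable_yocc hτ hμ0 hπ hγ s) t
      (fun j _ => mul_nonneg (pow_nonneg hγ.1.le j) ((stateDist_isDist hτ hμ0 hπ j).1 s))
  have h2 : 0 < γ ^ t * stateDist τ μ0 π t s := mul_pos (pow_pos hγ.1 t) ht
  linarith

lemma yocc_flow (hτ : ∀ s a, IsDist (τ s a)) (hμ0 : IsDist μ0) (hπ : IsPolicy π)
    (hγ : γ ∈ Set.Ioo (0:ℝ) 1) (s : S) :
    yocc τ μ0 γ π s = μ0 s + γ * ∑ σ, ∑ a, yocc τ μ0 γ π σ * π σ a * τ σ a s := by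
  unfold yocc
  rw [Summable.tsum_eq_zero_add (summable_yocc hτ hμ0 hπ hγ s)]
  congr 1
  · simp [stateDist]
  · have hpt : ∀ t : ℕ, γ ^ (t+1) * stateDist τ μ0 π (t+1) s
        = γ * ∑ σ, (γ ^ t * stateDist τ μ0 π t σ) * (∑ a, π σ a * τ σ a s) := by
      intro t
      show γ ^ (t+1) * (∑ σ, ∑ a, stateDist τ μ0 π t σ * π σ a * τ σ a s) = _
      rw [Finset.mul_sum, Finset.mul_sum]
      apply Finset.sum_congr rfl; intro σ _
      rw [Finset.mul_sum, Finset.mul_sum, Finset.mul_sum]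
      apply Finset.sum_congr rfl; intro a _
      ring
    rw [tsum_congr hpt, tsum_mul_left]
    congr 1
    rw [Summable.tsum_finsetSum (fun σ _ => ((summable_yocc hτ hμ0 hπ hγ σ).mul_right _))]
    apply Finset.sum_congr rfl; intro σ _
    rw [tsum_mul_right, Finset.mul_sum]
    apply Finset.sum_congr rfl; intro a _
    ring

lemma flow_unique (hτ : ∀ s a, IsDist (τ s a)) (hπ : IsPolicy π)
    (hγ : γ ∈ Set.Ioo (0:ℝ) 1) (z : S → ℝ)
    (hz : ∀ s, z s = γ * ∑ σ, ∑ a, z σ * π σ a * τ σ a s) : ∀ s, z s = 0 := by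
  set N := ∑ s, |z s| with hN
  have key : N ≤ γ * N := by
    calc N = ∑ s, |γ * ∑ σ, ∑ a, z σ * π σ a * τ σ a s| := by
          apply Finset.sum_congr rfl; intro s _; rw [← hz s]
      _ ≤ ∑ s, γ * ∑ σ, ∑ a, |z σ| * π σ a * τ σ a s := by
          apply Finset.sum_le_sum; intro s _
          rw [abs_mul, abs_of_nonneg hγ.1.le]
          apply mul_le_mul_of_nonneg_left _ hγ.1.le
          calc |∑ σ, ∑ a, z σ * π σ a * τ σ a s|
              ≤ ∑ σ, |∑ a, z σ * π σ a * τ σ a s| := Finset.abs_sum_le_sum_abs _ _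
            _ ≤ ∑ σ, ∑ a, |z σ| * π σ a * τ σ a s := by
                apply Finset.sum_le_sum; intro σ _
                calc |∑ a, z σ * π σ a * τ σ a s| ≤ ∑ a, |z σ * π σ a * τ σ a s| :=
                      Finset.abs_sum_le_sum_abs _ _
                  _ ≤ ∑ a, |z σ| * π σ a * τ σ a s := by
                      apply Finset.sum_le_sum; intro a _
                      rw [abs_mul, abs_mul, abs_of_nonneg ((hπ σ).1 a),
                        abs_of_nonneg ((hτ σ a).1 s)]
      _ = γ * ∑ σ, ∑ a, ∑ s, |z σ| * π σ a * τ σ a s := by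
          rw [← Finset.mul_sum]
          congr 1
          calc (∑ s, ∑ σ, ∑ a, |z σ| * π σ a * τ σ a s)
              = ∑ σ, ∑ s, ∑ a, |z σ| * π σ a * τ σ a s := Finset.sum_comm
            _ = ∑ σ, ∑ a, ∑ s, |z σ| * π σ a * τ σ a s :=
                Finset.sum_congr rfl (fun σ _ => Finset.sum_comm)
      _ = γ * N := by
          congr 1
          rw [hN]
          apply Finset.sum_congr rfl; intro σ _
          have : ∀ a, (∑ s, |z σ| * π σ a * τ σ a s) = |z σ| * π σ a := by
            intro a
            have : ∀ s, |z σ| * π σ a * τ σ a s = |z σ| * π σ a * τ σ a s := fun _ => rfl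
            rw [← Finset.mul_sum, (hτ σ a).2, mul_one]
          simp only [this]
          rw [← Finset.mul_sum, (hπ σ).2, mul_one]
  have hNnn : 0 ≤ N := Finset.sum_nonneg (fun s _ => abs_nonneg _)
  have hN0 : N = 0 := by nlinarith [hγ.2]
  intro s
  have h1 : |z s| ≤ N := by
    rw [hN]
    exact Finset.single_le_sum (fun i _ => abs_nonneg (z i)) (Finset.mem_univ s)
  rw [hN0] at h1
  have := abs_nonneg (z s)
  have : |z s| = 0 := le_antisymm h1 this
  exact abs_eq_zero.mp this

end Aux4
section Aux5

variable {S A : Type*} [Fintype S] [Fintype A]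
variable {τ : S → A → S → ℝ} {μ0 : S → ℝ} {γ : ℝ}

open Classical in
/-- convexity of the occupancy set -/
lemma occ_mix (hτ : ∀ s a, IsDist (τ s a)) (hμ0 : IsDist μ0)
    (hγ : γ ∈ Set.Ioo (0:ℝ) 1) {π1 π2 : S → A → ℝ}
    (h1 : IsPolicy π1) (h2 : IsPolicy π2) (l : ℝ) (hl0 : 0 ≤ l) (hl1 : l ≤ 1) :
    ∃ π, IsPolicy π ∧ ∀ s a, yocc τ μ0 γ π s * π s a
      = l * (yocc τ μ0 γ π1 s * π1 s a) + (1-l) * (yocc τ μ0 γ π2 s * π2 s a) := by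
  set y1 := yocc τ μ0 γ π1 with hy1
  set y2 := yocc τ μ0 γ π2 with hy2
  set x : S → A → ℝ := fun s a => l * (y1 s * π1 s a) + (1-l) * (y2 s * π2 s a) with hx
  set yb : S → ℝ := fun s => l * y1 s + (1-l) * y2 s with hyb
  have hy1nn := yocc_nonneg hτ hμ0 h1 hγ
  have hy2nn := yocc_nonneg hτ hμ0 h2 hγ
  have hxnn : ∀ s a, 0 ≤ x s a := by
    intro s a
    have := (h1 s).1 a; have := (h2 s).1 a; have := hy1nn s; have := hy2nn s
    have h1l : 0 ≤ 1 - l := by linarith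
    positivity
  have hybnn : ∀ s, 0 ≤ yb s := by
    intro s
    have := hy1nn s; have := hy2nn s
    have h1l : 0 ≤ 1 - l := by linarith
    positivity
  have hsumx : ∀ s, (∑ a, x s a) = yb s := by
    intro s
    rw [hx]
    simp only
    rw [Finset.sum_add_distrib]
    congr 1
    · rw [← Finset.mul_sum]
      have : (∑ a, y1 s * π1 s a) = y1 s := by
        rw [← Finset.mul_sum, (h1 s).2, mul_one]
      rw [this]
    · rw [← Finset.mul_sum]
      have : (∑ a, y2 s * π2 s a) = y2 s := by
        rw [← Finset.mul_sum, (h2 s).2, mul_one]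
      rw [this]
  set π : S → A → ℝ := fun s a => if yb s = 0 then π1 s a else x s a / yb s with hπd
  have hπpol : IsPolicy π := by
    intro s
    constructor
    · intro a
      rw [hπd]
      simp only
      split
      · exact (h1 s).1 a
      · exact div_nonneg (hxnn s a) (hybnn s)
    · rw [hπd]
      simp only
      split
      · exact (h1 s).2
      · rw [← Finset.sum_div, hsumx s]
        exact div_self ‹yb s ≠ 0›
  have hkey : ∀ s a, yb s * π s a = x s a := by
    intro s a
    rw [hπd]
    simp only
    split
    · rename_i h0
      rw [h0, zero_mul]
      symm
      have := (Finset.sum_eq_zero_iff_of_nonneg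
        (fun a _ => hxnn s a)).mp (by rw [hsumx s, h0])
      exact this a (Finset.mem_univ a)
    · field_simp
  have flowb : ∀ s, yb s = μ0 s + γ * ∑ σ, ∑ a, yb σ * π σ a * τ σ a s := by
    intro s
    have f1 := yocc_flow hτ hμ0 h1 hγ s
    have f2 := yocc_flow hτ hμ0 h2 hγ s
    rw [← hy1] at f1
    rw [← hy2] at f2
    have : yb s = l * y1 s + (1-l) * y2 s := rfl
    rw [this, f1, f2]
    have expand : ∀ σ a, yb σ * π σ a * τ σ a s = x σ a * τ σ a s := by
      intro σ a; rw [hkey σ a]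
    calc l * (μ0 s + γ * ∑ σ, ∑ a, y1 σ * π1 σ a * τ σ a s)
          + (1-l) * (μ0 s + γ * ∑ σ, ∑ a, y2 σ * π2 σ a * τ σ a s)
        = μ0 s + γ * ∑ σ, ∑ a, (l * (y1 σ * π1 σ a) + (1-l) * (y2 σ * π2 σ a)) * τ σ a s := by
          have hsplit : (∑ σ, ∑ a, (l * (y1 σ * π1 σ a) + (1-l) * (y2 σ * π2 σ a)) * τ σ a s)
              = l * (∑ σ, ∑ a, y1 σ * π1 σ a * τ σ a s)
                + (1-l) * (∑ σ, ∑ a, y2 σ * π2 σ a * τ σ a s) := by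
            rw [Finset.mul_sum, Finset.mul_sum, ← Finset.sum_add_distrib]
            apply Finset.sum_congr rfl; intro σ _
            rw [Finset.mul_sum, Finset.mul_sum, ← Finset.sum_add_distrib]
            apply Finset.sum_congr rfl; intro a _
            ring
          rw [hsplit]
          ring
      _ = μ0 s + γ * ∑ σ, ∑ a, yb σ * π σ a * τ σ a s := by
          congr 1; congr 1
          apply Finset.sum_congr rfl; intro σ _
          apply Finset.sum_congr rfl; intro a _
          rw [expand σ a]
  have flowy := yocc_flow hτ hμ0 hπpol hγ
  have hsub : ∀ s, (∑ σ, ∑ a, (yocc τ μ0 γ π σ - yb σ) * π σ a * τ σ a s)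
      = (∑ σ, ∑ a, yocc τ μ0 γ π σ * π σ a * τ σ a s)
        - ∑ σ, ∑ a, yb σ * π σ a * τ σ a s := by
    intro s
    rw [← Finset.sum_sub_distrib]
    apply Finset.sum_congr rfl; intro σ _
    rw [← Finset.sum_sub_distrib]
    apply Finset.sum_congr rfl; intro a _
    ring
  have hz : ∀ s, (fun s => yocc τ μ0 γ π s - yb s) s
      = γ * ∑ σ, ∑ a, (fun s => yocc τ μ0 γ π s - yb s) σ * π σ a * τ σ a s := by
    intro s
    simp only
    rw [flowy s, flowb s, hsub s]
    ring
  have hzz := flow_unique hτ hπpol hγ _ hz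
  refine ⟨π, hπpol, fun s a => ?_⟩
  have hyy : yocc τ μ0 γ π s = yb s := by
    have := hzz s
    linarith
  rw [hyy, hkey s a]

lemma pos_of_mul3 {x y z : ℝ} (hx : 0 ≤ x) (hy : 0 ≤ y) (hz : 0 ≤ z)
    (h : 0 < x * y * z) : 0 < x ∧ 0 < y ∧ 0 < z := by
  refine ⟨?_, ?_, ?_⟩ <;> by_contra hc <;> push_neg at hc
  · have : x = 0 := le_antisymm hc hx
    rw [this] at h; simp at h
  · have : y = 0 := le_antisymm hc hy
    rw [this] at h; simp at h
  · have : z = 0 := le_antisymm hc hz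
    rw [this] at h; simp at h

lemma reach_transfer (hτ : ∀ s a, IsDist (τ s a)) (hμ0 : IsDist μ0)
    {πw π : S → A → ℝ} (hπw : IsPolicy πw) (hπ : IsPolicy π) (sb : S)
    (hsupp : ∀ σ a, σ ≠ sb → 0 < πw σ a → 0 < π σ a) :
    ∀ t s, 0 < stateDist τ μ0 πw t s →
      (∃ t', 0 < stateDist τ μ0 π t' sb) ∨ 0 < stateDist τ μ0 π t s := by
  intro t
  induction t with
  | zero => intro s h; right; exact h
  | succ t ih =>
    intro s h
    have hterm : ∃ σ, ∃ a, 0 < stateDist τ μ0 πw t σ * πw σ a * τ σ a s := by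
      by_contra hc
      push_neg at hc
      have : (∑ σ, ∑ a, stateDist τ μ0 πw t σ * πw σ a * τ σ a s) ≤ 0 :=
        Finset.sum_nonpos (fun σ _ => Finset.sum_nonpos (fun a _ => hc σ a))
      have h' : 0 < ∑ σ, ∑ a, stateDist τ μ0 πw t σ * πw σ a * τ σ a s := h
      linarith
    obtain ⟨σ, a, hpos⟩ := hterm
    obtain ⟨hD, hπwp, hτp⟩ := pos_of_mul3 ((stateDist_isDist hτ hμ0 hπw t).1 σ)
      ((hπw σ).1 a) ((hτ σ a).1 s) hpos
    rcases ih σ hD with hl | hr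
    · exact Or.inl hl
    · by_cases hσ : σ = sb
      · exact Or.inl ⟨t, hσ ▸ hr⟩
      · right
        have hπp : 0 < π σ a := hsupp σ a hσ hπwp
        have hterm2 : 0 < stateDist τ μ0 π t σ * π σ a * τ σ a s :=
          mul_pos (mul_pos hr hπp) hτp
        have hle : stateDist τ μ0 π t σ * π σ a * τ σ a s
            ≤ ∑ σ', ∑ a', stateDist τ μ0 π t σ' * π σ' a' * τ σ' a' s := by
          calc stateDist τ μ0 π t σ * π σ a * τ σ a s
              ≤ ∑ a', stateDist τ μ0 π t σ * π σ a' * τ σ a' s := by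
                apply Finset.single_le_sum (f := fun a' =>
                  stateDist τ μ0 π t σ * π σ a' * τ σ a' s) _ (Finset.mem_univ a)
                intro a' _
                have := (stateDist_isDist hτ hμ0 hπ t).1 σ
                have := (hπ σ).1 a'
                have := (hτ σ a').1 s
                positivity
            _ ≤ ∑ σ', ∑ a', stateDist τ μ0 π t σ' * π σ' a' * τ σ' a' s := by
                apply Finset.single_le_sum (f := fun σ' =>
                  ∑ a', stateDist τ μ0 π t σ' * π σ' a' * τ σ' a' s) _ (Finset.mem_univ σ)
                intro σ' _
                apply Finset.sum_nonneg; intro a' _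
                have := (stateDist_isDist hτ hμ0 hπ t).1 σ'
                have := (hπ σ').1 a'
                have := (hτ σ' a').1 s
                positivity
        show 0 < ∑ σ', ∑ a', stateDist τ μ0 π t σ' * π σ' a' * τ σ' a' s
        linarith

end Aux5
section Aux6

variable {S A : Type*} [Fintype S] [Fintype A] [Nonempty A]
variable {τ : S → A → S → ℝ} {μ0 : S → ℝ} {γ : ℝ}

/-- the uniform policy -/
noncomputable def unifP (S A : Type*) [Fintype A] : S → A → ℝ :=
  fun _ _ => ((Fintype.card A : ℝ))⁻¹

lemma unifP_pos (S : Type*) {A : Type*} [Fintype A] [Nonempty A] (s : S) (a : A) :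
    0 < unifP S A s a := by
  unfold unifP
  have : 0 < (Fintype.card A : ℝ) := by
    have := Fintype.card_pos (α := A)
    positivity
  positivity

lemma unifP_policy (S : Type*) {A : Type*} [Fintype A] [Nonempty A] :
    IsPolicy (unifP S A) := by
  intro s
  constructor
  · intro a; exact (unifP_pos S s a).le
  · unfold unifP
    rw [Finset.sum_const, Finset.card_univ, nsmul_eq_mul]
    have : (Fintype.card A : ℝ) ≠ 0 := by
      have := Fintype.card_pos (α := A)
      positivity
    field_simp

open Classical in
lemma differ_zero_of_J_zero (hτ : ∀ s a, IsDist (τ s a)) (hμ0 : IsDist μ0)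
    (hγ : γ ∈ Set.Ioo (0:ℝ) 1) (hreach : AllReachable τ μ0) (R : Reward S A)
    (h : ∀ π, IsPolicy π → J τ μ0 γ R π = 0) : DifferBy γ τ R 0 := by
  classical
  set π0 : S → A → ℝ := unifP S A with hπ0d
  have hπ0 : IsPolicy π0 := unifP_policy S
  set Φ : S → ℝ := fun s => J τ (dd s) γ R π0 with hΦd
  set R' : Reward S A := fun s a s' => R s a s' + γ * Φ s' - Φ s with hR'd
  set Asa : S → A → ℝ := fun s a => ∑ s', τ s a s' * R' s a s' with hAd
  -- value of shaped reward is zero from every start state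
  have hW : ∀ s, J τ (dd s) γ R' π0 = 0 := by
    intro s
    rw [hR'd, J_shaping hτ (isDist_dd s) hπ0 hγ R Φ]
    have : (∑ σ, dd s σ * Φ σ) = Φ s := by
      unfold dd
      simp
    rw [this]
    have : J τ (dd s) γ R π0 = Φ s := rfl
    rw [this]
    ring
  -- one-step expected shaped reward under π0 vanishes
  have hB : ∀ s, (∑ a, π0 s a * Asa s a) = 0 := by
    intro s
    have hstep := J_step hτ (isDist_dd s) hπ0 hγ R'
    rw [hW s] at hstep
    have hrest : J τ (stepD τ π0 (dd s)) γ R' π0 = 0 := by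
      rw [J_mu_linear hτ hπ0 hγ R' (stepD τ π0 (dd s))]
      apply Finset.sum_eq_zero
      intro σ _
      rw [hW σ, mul_zero]
    rw [hrest, mul_zero, add_zero] at hstep
    -- hstep : 0 = inner3 τ R' π0 (dd s)
    have hinner : inner3 τ R' π0 (dd s) = ∑ a, π0 s a * Asa s a := by
      unfold inner3
      have hcollapse : ∀ σ, (∑ a, ∑ s', dd s σ * π0 σ a * τ σ a s' * R' σ a s')
          = dd s σ * ∑ a, π0 σ a * Asa σ a := by
        intro σ
        rw [Finset.mul_sum]
        apply Finset.sum_congr rfl; intro a _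
        rw [hAd]
        simp only
        rw [Finset.mul_sum, Finset.mul_sum]
        apply Finset.sum_congr rfl; intro s' _
        ring
      rw [Finset.sum_congr rfl (fun σ _ => hcollapse σ)]
      unfold dd
      simp
    rw [hinner] at hstep
    linarith
  -- main step : Asa vanishes everywhere
  have hAzero : ∀ sb ab, Asa sb ab = 0 := by
    intro sb ab
    set π : S → A → ℝ := fun s a =>
      if s = sb then (if a = ab then 1 else 0) else π0 s a with hπd
    have hπpol : IsPolicy π := by
      intro s
      constructor
      · intro a
        rw [hπd]
        simp only
        split
        · split <;> norm_num
        · exact (hπ0 s).1 a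
      · rw [hπd]
        simp only
        by_cases hs : s = sb
        · simp [hs]
        · simp only [if_neg hs]
          exact (hπ0 s).2
    -- J of shaped reward under π is zero
    have hJ0 : J τ μ0 γ R' π = 0 := by
      rw [hR'd, J_shaping hτ hμ0 hπpol hγ R Φ, h π hπpol]
      have : (∑ s, μ0 s * Φ s) = J τ μ0 γ R π0 := by
        rw [J_mu_linear hτ hπ0 hγ R μ0]
      rw [this, h π0 hπ0]
      ring
    -- inner3 under π collapses to the single term at sb
    have hinner : ∀ t, inner3 τ R' π (stateDist τ μ0 π t)
        = stateDist τ μ0 π t sb * Asa sb ab := by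
      intro t
      unfold inner3
      have hcollapse : ∀ s, (∑ a, ∑ s', stateDist τ μ0 π t s * π s a * τ s a s' * R' s a s')
          = stateDist τ μ0 π t s * ∑ a, π s a * Asa s a := by
        intro s
        rw [Finset.mul_sum]
        apply Finset.sum_congr rfl; intro a _
        rw [hAd]
        simp only
        rw [Finset.mul_sum, Finset.mul_sum]
        apply Finset.sum_congr rfl; intro s' _
        ring
      rw [Finset.sum_congr rfl (fun s _ => hcollapse s)]
      rw [Finset.sum_eq_single sb]
      · congr 1
        rw [hπd]
        simp
      · intro s _ hs
        have : (∑ a, π s a * Asa s a) = ∑ a, π0 s a * Asa s a := by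
          apply Finset.sum_congr rfl; intro a _
          rw [hπd]
          simp [hs]
        rw [this, hB s, mul_zero]
      · intro hh
        exact absurd (Finset.mem_univ sb) hh
    have hJocc : J τ μ0 γ R' π = yocc τ μ0 γ π sb * Asa sb ab := by
      rw [J_eq, tsum_congr (fun t => by rw [hinner t])]
      unfold yocc
      rw [← tsum_mul_right]
      apply tsum_congr; intro t
      ring
    -- positivity of occupancy at sb
    obtain ⟨πw, tw, hπw, hposw⟩ := hreach sb
    have hsupp : ∀ σ a, σ ≠ sb → 0 < πw σ a → 0 < π σ a := by
      intro σ a hσ _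
      rw [hπd]
      simp only [if_neg hσ]
      exact unifP_pos S σ a
    have hex : ∃ t', 0 < stateDist τ μ0 π t' sb := by
      rcases reach_transfer hτ hμ0 hπw hπpol sb hsupp tw sb hposw with hl | hr
      · exact hl
      · exact ⟨tw, hr⟩
    have hyp := yocc_pos hτ hμ0 hπpol hγ hex
    rw [hJ0] at hJocc
    have := hJocc.symm
    rcases mul_eq_zero.mp this with h1 | h2
    · exact absurd h1 (ne_of_gt hyp)
    · exact h2
  refine ⟨R', ⟨Φ, fun s a s' => rfl⟩, fun s a => ?_⟩
  have : (∑ s', τ s a s' * (0 : Reward S A) s a s') = 0 := by simp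
  rw [this]
  have : (∑ s', τ s a s' * R' s a s') = Asa s a := rfl
  rw [this, hAzero s a]

end Aux6
section Aux7

variable {S A : Type*} [Fintype S] [Fintype A]
variable {τ : S → A → S → ℝ} {μ0 : S → ℝ} {π : S → A → ℝ} {γ : ℝ}

lemma J_eq_occ (hτ : ∀ s a, IsDist (τ s a)) (hμ0 : IsDist μ0) (hπ : IsPolicy π)
    (hγ : γ ∈ Set.Ioo (0:ℝ) 1) (R : Reward S A) :
    J τ μ0 γ R π = ∑ s, ∑ a, (yocc τ μ0 γ π s * π s a)
      * (∑ s', τ s a s' * R s a s') := by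
  rw [J_eq]
  have hpt : ∀ t : ℕ, γ ^ t * inner3 τ R π (stateDist τ μ0 π t)
      = ∑ s, (γ ^ t * stateDist τ μ0 π t s)
        * (∑ a, π s a * ∑ s', τ s a s' * R s a s') := by
    intro t
    unfold inner3
    rw [Finset.mul_sum]
    apply Finset.sum_congr rfl; intro s _
    rw [Finset.mul_sum, Finset.mul_sum]
    apply Finset.sum_congr rfl; intro a _
    rw [Finset.mul_sum, Finset.mul_sum, Finset.mul_sum]
    apply Finset.sum_congr rfl; intro s' _
    ring
  rw [tsum_congr hpt,
    Summable.tsum_finsetSum (fun s _ => (summable_yocc hτ hμ0 hπ hγ s).mul_right _)]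
  apply Finset.sum_congr rfl; intro s _
  rw [tsum_mul_right]
  have : (∑' t : ℕ, γ ^ t * stateDist τ μ0 π t s) = yocc τ μ0 γ π s := rfl
  rw [this, Finset.mul_sum]
  apply Finset.sum_congr rfl; intro a _
  ring

end Aux7

section Aux8

/-- Pure algebra: two functions related by the three-point property with a
non-constant first coordinate are affinely related. -/
lemma key_affine {P : Type*} (f g : P → ℝ)
    (H3 : ∀ (x y z : P) (l : ℝ), 0 ≤ l → l ≤ 1 → l * f x + (1 - l) * f y = f z →
      l * g x + (1 - l) * g y = g z)
    (a b : P) (hab : f a < f b) (x : P) :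
    g x - g a = ((g b - g a) / (f b - f a)) * (f x - f a) := by
  have hfba : f b - f a ≠ 0 := by linarith
  suffices hgoal : (g x - g a) * (f b - f a) = (g b - g a) * (f x - f a) by
    rw [div_mul_eq_mul_div, eq_div_iff hfba]
    linear_combination hgoal
  rcases le_or_gt (f x) (f a) with h1 | h1
  · -- f x ≤ f a : a = mix of x and b
    set l := (f b - f a) / (f b - f x) with hld
    have hd : 0 < f b - f x := by linarith
    have hl0 : 0 ≤ l := div_nonneg (by linarith) hd.le
    have hl1 : l ≤ 1 := by
      rw [hld, div_le_one hd]; linarith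
    have hfz : l * f x + (1 - l) * f b = f a := by
      rw [hld]; field_simp; ring
    have hg := H3 x b a l hl0 hl1 hfz
    have hl' : l * (f b - f x) = f b - f a := by
      rw [hld]; field_simp
    linear_combination (f b - f x) * hg - (g b - g x) * hfz
  · rcases le_or_gt (f x) (f b) with h2 | h2
    · -- f a < f x ≤ f b : x = mix of a and b
      set l := (f b - f x) / (f b - f a) with hld
      have hd : 0 < f b - f a := by linarith
      have hl0 : 0 ≤ l := div_nonneg (by linarith) hd.le
      have hl1 : l ≤ 1 := by
        rw [hld, div_le_one hd]; linarith
      have hfz : l * f a + (1 - l) * f b = f x := by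
        rw [hld]; field_simp; ring
      have hg := H3 a b x l hl0 hl1 hfz
      linear_combination (-(f b - f a)) * hg + (g b - g a) * hfz
    · -- f b < f x : b = mix of a and x
      set l := (f x - f b) / (f x - f a) with hld
      have hd : 0 < f x - f a := by linarith
      have hl0 : 0 ≤ l := div_nonneg (by linarith) hd.le
      have hl1 : l ≤ 1 := by
        rw [hld, div_le_one hd]; linarith
      have hfz : l * f a + (1 - l) * f x = f b := by
        rw [hld]; field_simp; ring
      have hg := H3 a x b l hl0 hl1 hfz
      linear_combination (f x - f a) * hg - (g x - g a) * hfz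

end Aux8
/-- a STARC metric vanishes exactly on pairs of reward functions that
induce the same ordering of policies. -/
theorem starc_eq_zero_iff_same_order
    {S A : Type*} [Fintype S] [Fintype A] [Nonempty S] [Nonempty A]
    (τ : S → A → S → ℝ) (hτ : ∀ s a, IsDist (τ s a))
    (μ0 : S → ℝ) (hμ0 : IsDist μ0)
    (γ : ℝ) (hγ : γ ∈ Set.Ioo (0 : ℝ) 1)
    (hreach : AllReachable τ μ0)
    (d : Reward S A → Reward S A → ℝ) (hd : IsSTARC γ τ d) :
    ∀ R1 R2 : Reward S A, d R1 R2 = 0 ↔ SameOrder τ μ0 γ R1 R2 := by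
  classical
  obtain ⟨c, n, m, sfun, hc, hn, hsn, hm, hdm⟩ := hd
  have hc0 : c 0 = 0 := hc.1.map_zero
  have hczero_iff : ∀ X : Reward S A, c X = 0 ↔ DifferBy γ τ X 0 := by
    intro X
    rw [← hc.2.2 X 0, hc0]
  have hnz : ∀ R : Reward S A, n (c R) = 0 ↔ c R = 0 :=
    fun R => hn.2.1 (c R) ⟨R, rfl⟩
  have hnnn : ∀ R : Reward S A, 0 ≤ n (c R) := fun R => hn.1 (c R) ⟨R, rfl⟩
  -- DifferBy gives a constant shift of J
  have hshift : ∀ Ra Rb : Reward S A, DifferBy γ τ Ra Rb →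
      ∃ k, ∀ π : Policy S A, J τ μ0 γ Rb π.1 = J τ μ0 γ Ra π.1 + k := by
    intro Ra Rb h
    obtain ⟨k, hk⟩ := J_differBy hτ hμ0 hγ h
    exact ⟨k, fun π => hk π.1 π.2⟩
  -- constant rewards canonicalise to zero
  have hconstdiff : ∀ kk : ℝ, DifferBy γ τ (fun _ _ _ => kk) (0 : Reward S A) := by
    intro kk
    refine ⟨0, ⟨fun _ => kk / (1 - γ), fun s a s' => ?_⟩, fun s a => rfl⟩
    show (0 : ℝ) = kk + γ * (kk / (1 - γ)) - kk / (1 - γ)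
    have h1 : (1:ℝ) - γ ≠ 0 := by have := hγ.2; intro hh; linarith
    field_simp
    ring
  -- rewards with constant J canonicalise to zero
  have hconstc : ∀ (X : Reward S A) (bb : ℝ),
      (∀ π : Policy S A, J τ μ0 γ X π.1 = bb) → c X = 0 := by
    intro X bb hX
    have h1γ : (1:ℝ) - γ ≠ 0 := by have := hγ.2; intro hh; linarith
    have hJY : ∀ π, IsPolicy π →
        J τ μ0 γ (fun s0 a0 s1 => X s0 a0 s1
          - ((1 - γ) * bb) * (fun (_ : S) (_ : A) (_ : S) => (1:ℝ)) s0 a0 s1) π = 0 := by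
      intro π hπ
      rw [J_combo hτ hμ0 hπ hγ (fun _ _ _ => (1:ℝ)) X ((1 - γ) * bb),
        J_const hτ hμ0 hπ hγ 1]
      have hXπ : J τ μ0 γ X π = bb := hX ⟨π, hπ⟩
      rw [hXπ]
      field_simp
      ring
    have hcY : c (fun s0 a0 s1 => X s0 a0 s1
        - ((1 - γ) * bb) * (fun (_ : S) (_ : A) (_ : S) => (1:ℝ)) s0 a0 s1) = 0 :=
      (hczero_iff _).mpr (differ_zero_of_J_zero hτ hμ0 hγ hreach _ hJY)
    have hcC : c (fun _ _ _ => (1 - γ) * bb) = 0 :=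
      (hczero_iff _).mpr (hconstdiff ((1 - γ) * bb))
    have hXdecomp : X = (fun s0 a0 s1 => X s0 a0 s1
        - ((1 - γ) * bb) * (fun (_ : S) (_ : A) (_ : S) => (1:ℝ)) s0 a0 s1)
        + (fun _ _ _ => (1 - γ) * bb) := by
      funext s0 a0 s1
      show X s0 a0 s1 = X s0 a0 s1 - ((1 - γ) * bb) * 1 + (1 - γ) * bb
      ring
    calc c X = c ((fun s0 a0 s1 => X s0 a0 s1
          - ((1 - γ) * bb) * (fun (_ : S) (_ : A) (_ : S) => (1:ℝ)) s0 a0 s1)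
          + (fun _ _ _ => (1 - γ) * bb)) := by rw [← hXdecomp]
      _ = 0 := by rw [hc.1.map_add, hcY, hcC, add_zero]
  -- affine J relation gives proportional canonicalisations
  have haffc : ∀ (R1 R2 : Reward S A) (α β : ℝ),
      (∀ π : Policy S A, J τ μ0 γ R2 π.1 = α * J τ μ0 γ R1 π.1 + β) →
      c R2 = α • c R1 := by
    intro R1 R2 α β hrel
    have hX : ∀ π : Policy S A,
        J τ μ0 γ (fun s0 a0 s1 => R2 s0 a0 s1 - α * R1 s0 a0 s1) π.1 = β := by
      intro π
      rw [J_combo hτ hμ0 π.2 hγ R1 R2 α, hrel π]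
      ring
    have hcX : c (fun s0 a0 s1 => R2 s0 a0 s1 - α * R1 s0 a0 s1) = 0 :=
      hconstc _ β hX
    have hdecomp : R2 = (fun s0 a0 s1 => R2 s0 a0 s1 - α * R1 s0 a0 s1) + α • R1 := by
      funext s0 a0 s1
      show R2 s0 a0 s1 = R2 s0 a0 s1 - α * R1 s0 a0 s1 + α * R1 s0 a0 s1
      ring
    calc c R2 = c ((fun s0 a0 s1 => R2 s0 a0 s1 - α * R1 s0 a0 s1) + α • R1) := by
          rw [← hdecomp]
      _ = α • c R1 := by rw [hc.1.map_add, hcX, hc.1.map_smul, zero_add]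
  -- proportional canonicalisations give affine J relation
  have hcaff : ∀ (R1 R2 : Reward S A) (α : ℝ), c R2 = α • c R1 →
      ∃ k, ∀ π : Policy S A, J τ μ0 γ R2 π.1 = α * J τ μ0 γ R1 π.1 + k := by
    intro R1 R2 α hprop
    have hcX : c (fun s0 a0 s1 => R2 s0 a0 s1 - α * R1 s0 a0 s1) = 0 := by
      have hdecomp : (fun s0 a0 s1 => R2 s0 a0 s1 - α * R1 s0 a0 s1)
          = R2 + (-α) • R1 := by
        funext s0 a0 s1
        show R2 s0 a0 s1 - α * R1 s0 a0 s1 = R2 s0 a0 s1 + (-α) * R1 s0 a0 s1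
        ring
      rw [hdecomp, hc.1.map_add, hc.1.map_smul, hprop]
      funext s0 a0 s1
      show α • c R1 s0 a0 s1 + (-α) • c R1 s0 a0 s1 = 0
      simp
    obtain ⟨k, hk⟩ := hshift _ _ ((hczero_iff _).mp hcX)
    refine ⟨-k, fun π => ?_⟩
    have h1 := hk π
    rw [J_zero] at h1
    have h2 := J_combo hτ hμ0 π.2 hγ R1 R2 α
    have : J τ μ0 γ R2 π.1 - α * J τ μ0 γ R1 π.1 = -k := by
      rw [← h2]; linarith
    linarith
  -- affine relation with positive slope gives SameOrder
  have horder : ∀ (R1 R2 : Reward S A) (α k : ℝ), 0 < α →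
      (∀ π : Policy S A, J τ μ0 γ R2 π.1 = α * J τ μ0 γ R1 π.1 + k) →
      SameOrder τ μ0 γ R1 R2 := by
    intro R1 R2 α k hα hrel π π'
    rw [hrel π, hrel π']
    constructor
    · intro hh; nlinarith
    · intro hh; nlinarith
  intro R1 R2
  constructor
  · -- d = 0 → SameOrder
    intro hzero
    rw [hdm R1 R2] at hzero
    obtain ⟨hmet, p, lo, up, hp, hlo, hup, hbd⟩ := hm
    have h1 := (hbd (sfun R1) ⟨R1, rfl⟩ (sfun R2) ⟨R2, rfl⟩).1
    rw [hzero] at h1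
    have hpnn : 0 ≤ p (sfun R1 - sfun R2) := hp.1 _ (Set.mem_univ _)
    have hp0 : p (sfun R1 - sfun R2) = 0 := by nlinarith
    have hss : sfun R1 = sfun R2 :=
      sub_eq_zero.mp ((hp.2.1 _ (Set.mem_univ _)).mp hp0)
    by_cases h1n : n (c R1) = 0 <;> by_cases h2n : n (c R2) = 0
    · -- both canonicalisations are zero
      have hce : c R1 = c R2 := by rw [(hnz R1).mp h1n, (hnz R2).mp h2n]
      obtain ⟨k, hk⟩ := hshift R1 R2 ((hc.2.2 R1 R2).mp hce)
      exact horder R1 R2 1 k one_pos (fun π => by rw [hk π]; ring)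
    · exfalso
      have hs1 : sfun R1 = 0 := by rw [(hsn R1).1 h1n, (hnz R1).mp h1n]
      have hs2 : sfun R2 = (n (c R2))⁻¹ • c R2 := (hsn R2).2 h2n
      have : (n (c R2))⁻¹ • c R2 = 0 := by rw [← hs2, ← hss, hs1]
      rcases smul_eq_zero.mp this with h | h
      · exact h2n (by
          have : n (c R2) ≠ 0 := h2n
          exact absurd h (inv_ne_zero this))
      · exact h2n ((hnz R2).mpr h)
    · exfalso
      have hs2 : sfun R2 = 0 := by rw [(hsn R2).1 h2n, (hnz R2).mp h2n]
      have hs1 : sfun R1 = (n (c R1))⁻¹ • c R1 := (hsn R1).2 h1n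
      have : (n (c R1))⁻¹ • c R1 = 0 := by rw [← hs1, hss, hs2]
      rcases smul_eq_zero.mp this with h | h
      · exact h1n (absurd h (inv_ne_zero h1n))
      · exact h1n ((hnz R1).mpr h)
    · -- both nonzero : proportional with positive factor
      have hn1 : 0 < n (c R1) := lt_of_le_of_ne (hnnn R1) (Ne.symm h1n)
      have hn2 : 0 < n (c R2) := lt_of_le_of_ne (hnnn R2) (Ne.symm h2n)
      have hs1 : sfun R1 = (n (c R1))⁻¹ • c R1 := (hsn R1).2 h1n
      have hs2 : sfun R2 = (n (c R2))⁻¹ • c R2 := (hsn R2).2 h2n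
      have heq : (n (c R1))⁻¹ • c R1 = (n (c R2))⁻¹ • c R2 := by
        rw [← hs1, ← hs2, hss]
      have hprop : c R2 = (n (c R2) / n (c R1)) • c R1 := by
        have := congrArg (fun x => (n (c R2)) • x) heq
        simp only [smul_smul] at this
        rw [div_eq_mul_inv, this, mul_inv_cancel₀ (ne_of_gt hn2), one_smul]
      obtain ⟨k, hk⟩ := hcaff R1 R2 _ hprop
      exact horder R1 R2 _ k (div_pos hn2 hn1) hk
  · -- SameOrder → d = 0
    intro hso
    suffices hss : sfun R1 = sfun R2 by
      rw [hdm R1 R2, hss]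
      exact hm.1.1 (sfun R2) ⟨R2, rfl⟩
    set f : Policy S A → ℝ := fun π => J τ μ0 γ R1 π.1 with hfd
    set g : Policy S A → ℝ := fun π => J τ μ0 γ R2 π.1 with hgd
    have Heq : ∀ x y : Policy S A, f x = f y → g x = g y := by
      intro x y hxy
      have h1 := (hso x y).mp (le_of_eq hxy)
      have h2 := (hso y x).mp (le_of_eq hxy.symm)
      exact le_antisymm h1 h2
    have Hmix : ∀ (R : Reward S A) (x y : Policy S A) (l : ℝ)
        (πm : S → A → ℝ) (hπm : IsPolicy πm),
        (∀ s a, yocc τ μ0 γ πm s * πm s a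
          = l * (yocc τ μ0 γ x.1 s * x.1 s a) + (1-l) * (yocc τ μ0 γ y.1 s * y.1 s a)) →
        J τ μ0 γ R πm = l * J τ μ0 γ R x.1 + (1-l) * J τ μ0 γ R y.1 := by
      intro R x y l πm hπm hmix
      rw [J_eq_occ hτ hμ0 hπm hγ R, J_eq_occ hτ hμ0 x.2 hγ R,
        J_eq_occ hτ hμ0 y.2 hγ R]
      rw [Finset.mul_sum, Finset.mul_sum, ← Finset.sum_add_distrib]
      apply Finset.sum_congr rfl; intro s _
      rw [Finset.mul_sum, Finset.mul_sum, ← Finset.sum_add_distrib]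
      apply Finset.sum_congr rfl; intro a _
      rw [hmix s a]
      ring
    have H3 : ∀ (x y z : Policy S A) (l : ℝ), 0 ≤ l → l ≤ 1 →
        l * f x + (1 - l) * f y = f z → l * g x + (1 - l) * g y = g z := by
      intro x y z l hl0 hl1 hfz
      obtain ⟨πm, hπm, hmix⟩ := occ_mix hτ hμ0 hγ x.2 y.2 l hl0 hl1
      have hfm : J τ μ0 γ R1 πm = l * f x + (1-l) * f y :=
        Hmix R1 x y l πm hπm hmix
      have hgm : J τ μ0 γ R2 πm = l * g x + (1-l) * g y :=
        Hmix R2 x y l πm hπm hmix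
      have hfzm : f (⟨πm, hπm⟩ : Policy S A) = f z := by
        show J τ μ0 γ R1 πm = f z
        rw [hfm, hfz]
      have := Heq ⟨πm, hπm⟩ z hfzm
      have hgm' : g (⟨πm, hπm⟩ : Policy S A) = l * g x + (1-l) * g y := hgm
      rw [← this, hgm']
    by_cases hconstf : ∀ x y : Policy S A, f x = f y
    · -- J R1 constant, hence J R2 constant, both canonicalise to 0
      set p0 : Policy S A := ⟨unifP S A, unifP_policy S⟩ with hp0d
      have hgconst : ∀ x y : Policy S A, g x = g y := by
        intro x y
        have h1 := (hso x y).mp (le_of_eq (hconstf x y))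
        have h2 := (hso y x).mp (le_of_eq (hconstf y x))
        exact le_antisymm h1 h2
      have hc1 : c R1 = 0 := hconstc R1 (f p0) (fun π => hconstf π p0)
      have hc2 : c R2 = 0 := hconstc R2 (g p0) (fun π => hgconst π p0)
      have hn1 : n (c R1) = 0 := (hnz R1).mpr hc1
      have hn2 : n (c R2) = 0 := (hnz R2).mpr hc2
      rw [(hsn R1).1 hn1, (hsn R2).1 hn2, hc1, hc2]
    · push_neg at hconstf
      obtain ⟨x0, y0, hxy⟩ := hconstf
      obtain ⟨a, b, hab⟩ : ∃ a b : Policy S A, f a < f b := by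
        rcases lt_or_gt_of_ne hxy with h | h
        · exact ⟨x0, y0, h⟩
        · exact ⟨y0, x0, h⟩
      have hkey := key_affine f g H3 a b hab
      have hgab : g a < g b := by
        have h1 := (hso a b).mp hab.le
        rcases lt_or_eq_of_le h1 with h | h
        · exact h
        · exfalso
          have := (hso b a).mpr (le_of_eq h.symm)
          linarith
      have hα : 0 < (g b - g a) / (f b - f a) :=
        div_pos (by linarith) (by linarith)
      have hrel : ∀ π : Policy S A, J τ μ0 γ R2 π.1
          = ((g b - g a) / (f b - f a)) * J τ μ0 γ R1 π.1
            + (g a - ((g b - g a) / (f b - f a)) * f a) := by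
        intro π
        have := hkey π
        show g π = _
        have hfπ : f π = J τ μ0 γ R1 π.1 := rfl
        rw [← hfπ]
        linarith [hkey π]
      have hprop := haffc R1 R2 _ _ hrel
      by_cases h1n : n (c R1) = 0
      · have hc1 : c R1 = 0 := (hnz R1).mp h1n
        have hc2 : c R2 = 0 := by
          rw [hprop, hc1, smul_zero]
        have hn2 : n (c R2) = 0 := (hnz R2).mpr hc2
        rw [(hsn R1).1 h1n, (hsn R2).1 hn2, hc1, hc2]
      · have hn1 : 0 < n (c R1) := lt_of_le_of_ne (hnnn R1) (Ne.symm h1n)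
        set α := (g b - g a) / (f b - f a) with hαd
        have hnormsmul : n (c R2) = |α| * n (c R1) := by
          rw [hprop]
          exact hn.2.2.1 (c R1) ⟨R1, rfl⟩ α
        have habs : |α| = α := abs_of_pos hα
        have hn2 : n (c R2) = α * n (c R1) := by rw [hnormsmul, habs]
        have hn2ne : n (c R2) ≠ 0 := by
          rw [hn2]
          exact ne_of_gt (mul_pos hα hn1)
        rw [(hsn R1).2 h1n, (hsn R2).2 hn2ne, hn2, hprop, smul_smul]
        congr 1
        have hαne : α ≠ 0 := ne_of_gt hα
        rw [mul_inv, mul_comm (α⁻¹) ((n (c R1))⁻¹), mul_assoc,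
          inv_mul_cancel₀ hαne, mul_one]
    
end RewardPaper
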